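/- Let K ≥ 1 be an integer and let g, h > 0 be reals. For all reals P₁, P₂ > 0 satisfying P₁·g ≤ P₂·h, one has (1/2)·log₂(1 + K·P₁·g) / (P₁ + K·P₂) ≤ (2/ln 2) · min{ K·g, √(K·g·h), K·h }. -/

import Mathlib

/-!
With `x = K P₁ g` and total power `D = P₁ + K P₂`, the bound `log (1 + x) ≤ x` reduces the claim
to `x ≤ 4 D m` for each of the three terms `m` of the minimum. The term `K g` follows from
`P₁ ≤ D`; the terms `√(K g h)` and `K h` use the regime condition `P₁ g ≤ P₂ h`, the former
together with AM-GM `4 P₁ (K P₂) ≤ D²`, the latter together with `K ≤ K²` for a natural number `K`.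
-/

open Real

lemma Real.logb_two_one_add_le {x : ℝ} (hx : -1 < x) : logb 2 (1 + x) ≤ x / log 2 := by
  have hlog : log (1 + x) ≤ x := by
    linarith [log_le_sub_one_of_pos (show 0 < 1 + x by linarith)]
  exact div_le_div_of_nonneg_right hlog (log_pos one_lt_two).le

lemma half_logb_one_add_div_le {x D m : ℝ} (hx : -1 < x) (hD : 0 < D) (h : x ≤ 4 * D * m) :
    1 / 2 * logb 2 (1 + x) / D ≤ 2 / log 2 * m := by
  have hlog2 : 0 < log 2 := log_pos one_lt_two
  calc 1 / 2 * logb 2 (1 + x) / D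
      ≤ 1 / 2 * (x / log 2) / D := by gcongr; exact logb_two_one_add_le hx
    _ ≤ 1 / 2 * (4 * D * m / log 2) / D := by gcongr
    _ = 2 / log 2 * m := by field_simp; ring

section Cuts

variable (K : ℕ) {g h P₁ P₂ : ℝ}

lemma snr_le_four_mul_power_mul_Kg (hg : 0 ≤ g) (hP₁ : 0 ≤ P₁) (hP₂ : 0 ≤ P₂) :
    K * P₁ * g ≤ 4 * (P₁ + K * P₂) * (K * g) := by
  calc (K : ℝ) * P₁ * g = P₁ * (K * g) := by ring
    _ ≤ 4 * (P₁ + K * P₂) * (K * g) := by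
      gcongr
      have : (0 : ℝ) ≤ K * P₂ := by positivity
      linarith

lemma snr_le_four_mul_power_mul_sqrt_Kgh (hg : 0 ≤ g) (hh : 0 ≤ h) (hP₁ : 0 ≤ P₁)
    (hP₂ : 0 ≤ P₂) (hreg : P₁ * g ≤ P₂ * h) :
    K * P₁ * g ≤ 4 * (P₁ + K * P₂) * √(K * g * h) := by
  have hsq : (K * P₁ * g) ^ 2 ≤ (4 * (P₁ + K * P₂)) ^ 2 * (K * g * h) := by
    have hKgh : (0 : ℝ) ≤ K * g * h := by positivity
    calc ((K : ℝ) * P₁ * g) ^ 2 = K ^ 2 * (P₁ * g) * (P₁ * g) := by ring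
      _ ≤ K ^ 2 * (P₁ * g) * (P₂ * h) := by gcongr
      _ = K * g * h * (4 * P₁ * (K * P₂)) / 4 := by ring
      _ ≤ K * g * h * (P₁ + K * P₂) ^ 2 / 4 := by gcongr; exact four_mul_le_sq_add _ _
      _ ≤ (4 * (P₁ + K * P₂)) ^ 2 * (K * g * h) := by
        nlinarith [mul_nonneg hKgh (sq_nonneg (P₁ + K * P₂))]
  calc (K : ℝ) * P₁ * g ≤ √((4 * (P₁ + K * P₂)) ^ 2 * (K * g * h)) := le_sqrt_of_sq_le hsq
    _ = 4 * (P₁ + K * P₂) * √(K * g * h) := by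
      rw [sqrt_mul (sq_nonneg _), sqrt_sq (by positivity)]

lemma snr_le_four_mul_power_mul_Kh (hh : 0 ≤ h) (hP₁ : 0 ≤ P₁) (hP₂ : 0 ≤ P₂)
    (hreg : P₁ * g ≤ P₂ * h) :
    K * P₁ * g ≤ 4 * (P₁ + K * P₂) * (K * h) := by
  have hK : (K : ℝ) ≤ K ^ 2 := by exact_mod_cast Nat.le_self_pow two_ne_zero K
  calc (K : ℝ) * P₁ * g = K * (P₁ * g) := by ring
    _ ≤ K * (P₂ * h) := by gcongr
    _ ≤ K ^ 2 * (P₂ * h) := by gcongr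
    _ = K * h * (K * P₂) := by ring
    _ ≤ K * h * (4 * (P₁ + K * P₂)) := by
      have : (0 : ℝ) ≤ K * P₂ := by positivity
      exact mul_le_mul_of_nonneg_left (by linarith) (by positivity)
    _ = 4 * (P₁ + K * P₂) * (K * h) := by ring

end Cuts

theorem regime_ii_rate_per_unit_energy_bound_general
    (K : ℕ) (g h : ℝ) (hg : 0 < g) (hh : 0 < h)
    (P₁ P₂ : ℝ) (hP₁ : 0 < P₁) (hP₂ : 0 < P₂)
    (hreg : P₁ * g ≤ P₂ * h) :
    (1 / 2) * Real.logb 2 (1 + (K : ℝ) * P₁ * g) / (P₁ + (K : ℝ) * P₂) ≤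
      (2 / Real.log 2) *
        min ((K : ℝ) * g) (min (Real.sqrt ((K : ℝ) * g * h)) ((K : ℝ) * h)) := by
  have hD : 0 < P₁ + (K : ℝ) * P₂ := by positivity
  have hsnr : (0 : ℝ) ≤ K * P₁ * g := by positivity
  refine half_logb_one_add_div_le (by linarith) hD ?_
  rw [mul_min_of_nonneg _ _ (by positivity), mul_min_of_nonneg _ _ (by positivity)]
  exact le_min (snr_le_four_mul_power_mul_Kg K hg.le hP₁.le hP₂.le)
    (le_min (snr_le_four_mul_power_mul_sqrt_Kgh K hg.le hh.le hP₁.le hP₂.le hreg)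
      (snr_le_four_mul_power_mul_Kh K hh.le hP₁.le hP₂.le hreg))

/-- Rate per unit energy bound in the low-SNR regime (ii) (broadcast cut binding). -/
theorem regime_ii_rate_per_unit_energy_bound
    (K : ℕ) (hK : 1 ≤ K) (g h : ℝ) (hg : 0 < g) (hh : 0 < h)
    (P₁ P₂ : ℝ) (hP₁ : 0 < P₁) (hP₂ : 0 < P₂)
    (hreg : P₁ * g ≤ P₂ * h) :
    (1 / 2) * Real.logb 2 (1 + (K : ℝ) * P₁ * g) / (P₁ + (K : ℝ) * P₂) ≤
      (2 / Real.log 2) *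
        min ((K : ℝ) * g) (min (Real.sqrt ((K : ℝ) * g * h)) ((K : ℝ) * h)) :=
  regime_ii_rate_per_unit_energy_bound_general K g h hg hh P₁ P₂ hP₁ hP₂ hreg
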